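/- arXiv:1407.3604 — 6 statements merged into one kernel-verified Lean document; each statement's English description precedes it below -/
import Mathlib

section
/- For every natural number n ≥ 1, every n-almost disjoint family 𝒳 of countable sets is essentially disjoint; that is, there is a choice of a finite subset F(A) ⊆ A for each A ∈ 𝒳 such that the family {A \ F(A) : A ∈ 𝒳} is pairwise disjoint. -/
/-!
Call a subfamily `𝒮` of `𝒳` saturated if every member of `𝒳` meeting `⋃₀ 𝒮` in `n` points
already lies in `𝒮`; a member outside a saturated `𝒮` then meets `⋃₀ 𝒮` in a finite set.
As members are countable and distinct members share fewer than `n` points, every subfamily `𝒮`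
lies in a saturated one of size at most `max #𝒮 ℵ₀`, and since `n` is finite, directed unions of
saturated families are saturated.

Induct on `#𝒳`. If `𝒳` is countable, enumerate it and remove from each member its (finite)
intersection with the earlier ones. Otherwise filter `𝒳` by an increasing chain of saturated
subfamilies of size `< #𝒳`, rank each member by the first stage containing it, make each rank
slice essentially disjoint by induction, and in addition remove from each member its finite
intersection with the union of all earlier stages.
-/

open Cardinal Set

universe u

variable {α : Type u}

def EssentiallyDisjoint (𝒳 : Set (Set α)) : Prop :=
  ∃ F : Set α → Set α, (∀ A ∈ 𝒳, F A ⊆ A ∧ (F A).Finite) ∧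
    𝒳.Pairwise fun A B => Disjoint (A \ F A) (B \ F B)

def AlmostDisjoint (n : ℕ) (𝒳 : Set (Set α)) : Prop :=
  𝒳.Pairwise fun A B => #↥(A ∩ B) < n

theorem mk_sUnion_le_max {𝒮 : Set (Set α)} (h : ∀ A ∈ 𝒮, A.Countable) :
    #↥(⋃₀ 𝒮) ≤ max #𝒮 ℵ₀ :=
  calc #↥(⋃₀ 𝒮) ≤ #𝒮 * ℵ₀ :=
        (mk_sUnion_le 𝒮).trans (by
          gcongr
          exact ciSup_le' fun A => le_aleph0_iff_set_countable.2 (h A A.2))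
    _ ≤ max #𝒮 ℵ₀ := mul_le_max_of_aleph0_le_right le_rfl

theorem mk_iUnion_nat_le {β : Type u} {f : ℕ → Set β} {c : Cardinal.{u}} (hc : ℵ₀ ≤ c)
    (h : ∀ k, #(f k) ≤ c) : #↥(⋃ k, f k) ≤ c := by
  have := mk_iUnion_le_lift f
  simp only [lift_uzero, mk_nat, lift_aleph0] at this
  exact this.trans (mul_le_of_le hc hc (ciSup_le' h))

theorem exists_ordinal_rank_mk_le_lt {β : Type u} (s : Set β) (hs : ℵ₀ ≤ #s) :
    ∃ τ : β → Ordinal.{u}, ∀ b ∈ s, #{c ∈ s | τ c ≤ τ b} < #s := by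
  classical
  obtain ⟨r, hr, hrs⟩ := exists_ord_eq s
  let τ : β → Ordinal.{u} := fun c => if h : c ∈ s then Ordinal.typein r ⟨c, h⟩ else 0
  refine ⟨τ, fun b hb => ?_⟩
  have hsub : {c ∈ s | τ c ≤ τ b} ⊆ Subtype.val '' {c | r c ⟨b, hb⟩} ∪ {b} := by
    rintro c ⟨hc, hcb⟩
    simp only [τ, dif_pos hc, dif_pos hb, Ordinal.typein_le_typein] at hcb
    rcases trichotomous_of r ⟨c, hc⟩ ⟨b, hb⟩ with h | h | h
    · exact Or.inl ⟨_, h, rfl⟩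
    · exact Or.inr (congrArg Subtype.val h)
    · exact absurd h hcb
  calc #{c ∈ s | τ c ≤ τ b} ≤ #{c | r c ⟨b, hb⟩} + 1 :=
        (mk_le_mk_of_subset hsub).trans ((mk_union_le _ _).trans
          (add_le_add mk_image_le (mk_singleton b).le))
    _ < #s := add_lt_of_lt hs (card_typein_lt _ hrs) (one_lt_aleph0.trans_le hs)

namespace EssentiallyDisjoint

theorem of_subsingleton {𝒳 : Set (Set α)} (h : 𝒳.Subsingleton) : EssentiallyDisjoint 𝒳 :=
  ⟨fun _ => ∅, fun _ _ => ⟨empty_subset _, finite_empty⟩, h.pairwise _⟩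

theorem of_rank {𝒳 : Set (Set α)} {ι : Type*} [LinearOrder ι] (σ : Set α → ι)
    (hslice : ∀ i, EssentiallyDisjoint {A ∈ 𝒳 | σ A = i})
    (hearlier : ∀ A ∈ 𝒳, (A ∩ ⋃₀ {B ∈ 𝒳 | σ B < σ A}).Finite) :
    EssentiallyDisjoint 𝒳 := by
  choose G hGsub hGdisj using hslice
  let F : Set α → Set α := fun A => A ∩ ⋃₀ {B ∈ 𝒳 | σ B < σ A} ∪ G (σ A) A
  have hlt : ∀ A ∈ 𝒳, ∀ B ∈ 𝒳, σ A < σ B → Disjoint (A \ F A) (B \ F B) :=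
    fun A hA B _ hAB => disjoint_left.2 fun _ hxA hxB =>
      hxB.2 (Or.inl ⟨hxB.1, A, ⟨hA, hAB⟩, hxA.1⟩)
  refine ⟨F, fun A hA => ⟨union_subset inter_subset_left (hGsub _ A ⟨hA, rfl⟩).1,
    (hearlier A hA).union (hGsub _ A ⟨hA, rfl⟩).2⟩, fun A hA B hB hAB => ?_⟩
  rcases lt_trichotomy (σ A) (σ B) with h | h | h
  · exact hlt A hA B hB h
  · have hGB : G (σ A) B ⊆ F B := h ▸ subset_union_right
    exact (hGdisj (σ A) ⟨hA, rfl⟩ ⟨hB, h.symm⟩ hAB).mono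
      (sdiff_subset_sdiff_right subset_union_right) (sdiff_subset_sdiff_right hGB)
  · exact (hlt B hB A hA h).symm

theorem of_countable {𝒳 : Set (Set α)} (h𝒳 : 𝒳.Countable)
    (hfin : 𝒳.Pairwise fun A B => (A ∩ B).Finite) : EssentiallyDisjoint 𝒳 := by
  obtain ⟨σ, hσ⟩ := countable_iff_exists_injOn.1 h𝒳
  refine of_rank σ (fun k => of_subsingleton fun A hA B hB =>
    hσ hA.1 hB.1 (hA.2.trans hB.2.symm)) fun A hA => ?_
  have hearlier : {B ∈ 𝒳 | σ B < σ A}.Finite :=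
    ((finite_Iio (σ A)).subset (image_subset_iff.2 fun B hB => hB.2)).of_finite_image
      (hσ.mono (sep_subset _ _))
  rw [sUnion_eq_biUnion, inter_iUnion₂]
  exact hearlier.biUnion fun B hB => hfin hA hB.1 (ne_of_apply_ne σ hB.2.ne')

end EssentiallyDisjoint

def IsSaturated (n : ℕ) (𝒳 𝒮 : Set (Set α)) : Prop :=
  ∀ A ∈ 𝒳, ∀ t : Finset α, t.card = n → ↑t ⊆ A ∩ ⋃₀ 𝒮 → A ∈ 𝒮

def saturationStep (n : ℕ) (𝒳 𝒮 : Set (Set α)) : Set (Set α) :=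
  𝒮 ∪ {A ∈ 𝒳 | ∃ t : Finset α, t.card = n ∧ ↑t ⊆ A ∩ ⋃₀ 𝒮}

def saturation (n : ℕ) (𝒳 𝒮 : Set (Set α)) : Set (Set α) :=
  ⋃ k, (saturationStep n 𝒳)^[k] 𝒮

section Saturation

variable {n : ℕ} {𝒳 𝒮 : Set (Set α)}

theorem IsSaturated.finite_inter_sUnion (h : IsSaturated n 𝒳 𝒮) {A : Set α} (hA : A ∈ 𝒳)
    (hA𝒮 : A ∉ 𝒮) : (A ∩ ⋃₀ 𝒮).Finite := by
  by_contra hinf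
  obtain ⟨t, ht, htn⟩ := Set.Infinite.exists_subset_card_eq hinf n
  exact hA𝒮 (h A hA t htn ht)

theorem Directed.exists_finset_subset_sUnion {ι : Type*} [Nonempty ι] {D : ι → Set (Set α)}
    (hD : Directed (· ⊆ ·) D) {t : Finset α} (ht : ↑t ⊆ ⋃₀ ⋃ i, D i) :
    ∃ i, ↑t ⊆ ⋃₀ D i := by
  rw [sUnion_iUnion] at ht
  exact (hD.mono_comp (g := sUnion) _ fun _ _ => sUnion_mono)
    |>.exists_mem_subset_of_finset_subset_biUnion ht

theorem IsSaturated.iUnion {ι : Type*} [Nonempty ι] {D : ι → Set (Set α)}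
    (hD : Directed (· ⊆ ·) D) (hsat : ∀ i, IsSaturated n 𝒳 (D i)) :
    IsSaturated n 𝒳 (⋃ i, D i) := by
  intro A hA t htn ht
  obtain ⟨i, hi⟩ := hD.exists_finset_subset_sUnion (ht.trans inter_subset_right)
  exact mem_iUnion.2 ⟨i, hsat i A hA t htn (subset_inter (ht.trans inter_subset_left) hi)⟩

theorem subset_saturationStep : 𝒮 ⊆ saturationStep n 𝒳 𝒮 := subset_union_left

theorem monotone_saturationStep : Monotone (saturationStep n 𝒳) :=
  fun _ _ h => union_subset_union h fun _ ⟨hA, t, htn, ht⟩ =>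
    ⟨hA, t, htn, ht.trans (inter_subset_inter_right _ (sUnion_mono h))⟩

theorem saturationStep_subset (h : 𝒮 ⊆ 𝒳) : saturationStep n 𝒳 𝒮 ⊆ 𝒳 :=
  union_subset h (sep_subset _ _)

theorem subset_saturation : 𝒮 ⊆ saturation n 𝒳 𝒮 :=
  subset_iUnion (fun k => (saturationStep n 𝒳)^[k] 𝒮) 0

theorem saturation_mono : Monotone (saturation n 𝒳) :=
  fun _ _ h => iUnion_mono fun k => monotone_saturationStep.iterate k h

theorem isSaturated_saturation : IsSaturated n 𝒳 (saturation n 𝒳 𝒮) := by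
  intro A hA t htn ht
  have hD : Directed (· ⊆ ·) fun k => (saturationStep n 𝒳)^[k] 𝒮 :=
    Monotone.directed_le fun _ _ hkl =>
      Function.monotone_iterate_of_id_le (fun _ => subset_saturationStep) hkl 𝒮
  obtain ⟨k, hk⟩ := hD.exists_finset_subset_sUnion (ht.trans inter_subset_right)
  refine mem_iUnion.2 ⟨k + 1, ?_⟩
  rw [Function.iterate_succ_apply']
  exact Or.inr ⟨hA, t, htn, subset_inter (ht.trans inter_subset_left) hk⟩

end Saturation

namespace AlmostDisjoint

variable {n : ℕ} {𝒳 𝒮 : Set (Set α)}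

theorem mono (had : AlmostDisjoint n 𝒳) (h : 𝒮 ⊆ 𝒳) : AlmostDisjoint n 𝒮 :=
  Set.Pairwise.mono h had

theorem pairwise_finite_inter (had : AlmostDisjoint n 𝒳) :
    𝒳.Pairwise fun A B => (A ∩ B).Finite :=
  had.mono' fun _ _ h => lt_aleph0_iff_set_finite.1 (h.trans natCast_lt_aleph0)

theorem eq_of_finset_subset_inter (had : AlmostDisjoint n 𝒳) {A B : Set α} (hA : A ∈ 𝒳)
    (hB : B ∈ 𝒳) {t : Finset α} (htn : t.card = n) (ht : ↑t ⊆ A ∩ B) : A = B := by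
  by_contra hAB
  have hle := mk_le_mk_of_subset ht
  simp only [Finset.coe_sort_coe, mk_coe_finset, htn] at hle
  exact (had hA hB hAB).not_ge hle

theorem mk_saturationStep_le (had : AlmostDisjoint n 𝒳) (hcount : ∀ A ∈ 𝒳, A.Countable)
    (h𝒮 : 𝒮 ⊆ 𝒳) : #(saturationStep n 𝒳 𝒮) ≤ max #𝒮 ℵ₀ := by
  let 𝒩 := {A ∈ 𝒳 | ∃ t : Finset α, t.card = n ∧ ↑t ⊆ A ∩ ⋃₀ 𝒮}
  choose t htn ht using fun A : 𝒩 => A.2.2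
  have hinj : Function.Injective fun A : 𝒩 =>
      (⟨t A, (ht A).trans inter_subset_right, by simp [htn A]⟩ :
        {s : Set α // s ⊆ ⋃₀ 𝒮 ∧ #s ≤ n}) := by
    intro A B hAB
    have hAB : t A = t B := Finset.coe_injective (congrArg Subtype.val hAB)
    exact Subtype.ext (had.eq_of_finset_subset_inter A.2.1 B.2.1 (htn A)
      (subset_inter ((ht A).trans inter_subset_left) (hAB ▸ (ht B).trans inter_subset_left)))
  have h𝒩 : #𝒩 ≤ max #𝒮 ℵ₀ :=
    calc #𝒩 ≤ max #↥(⋃₀ 𝒮) ℵ₀ ^ (n : Cardinal) :=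
          (mk_le_of_injective hinj).trans (mk_bounded_subset_le _ _)
      _ ≤ max #↥(⋃₀ 𝒮) ℵ₀ := power_nat_le (le_max_right _ _)
      _ ≤ max #𝒮 ℵ₀ := max_le (mk_sUnion_le_max fun A hA => hcount A (h𝒮 hA)) le_sup_right
  exact (mk_union_le _ _).trans (add_le_of_le (le_max_right _ _) (le_max_left _ _) h𝒩)

theorem mk_saturation_le (had : AlmostDisjoint n 𝒳) (hcount : ∀ A ∈ 𝒳, A.Countable)
    (h𝒮 : 𝒮 ⊆ 𝒳) : #(saturation n 𝒳 𝒮) ≤ max #𝒮 ℵ₀ := by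
  have hstage : ∀ k, (saturationStep n 𝒳)^[k] 𝒮 ⊆ 𝒳 ∧
      #((saturationStep n 𝒳)^[k] 𝒮) ≤ max #𝒮 ℵ₀ := by
    intro k
    induction k with
    | zero => exact ⟨h𝒮, le_max_left _ _⟩
    | succ k ih =>
      rw [Function.iterate_succ_apply']
      refine ⟨saturationStep_subset ih.1, (had.mk_saturationStep_le hcount ih.1).trans ?_⟩
      exact max_le ih.2 (le_max_right _ _)
  exact mk_iUnion_nat_le (le_max_right _ _) fun k => (hstage k).2

theorem exists_rank (had : AlmostDisjoint n 𝒳) (hcount : ∀ A ∈ 𝒳, A.Countable)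
    (h𝒳 : ℵ₀ < #𝒳) :
    ∃ σ : Set α → Ordinal.{u}, (∀ o, #{A ∈ 𝒳 | σ A = o} < #𝒳) ∧
      ∀ A ∈ 𝒳, (A ∩ ⋃₀ {B ∈ 𝒳 | σ B < σ A}).Finite := by
  obtain ⟨τ, hτ⟩ := exists_ordinal_rank_mk_le_lt 𝒳 h𝒳.le
  let D : Ordinal.{u} → Set (Set α) := fun o => saturation n 𝒳 {B ∈ 𝒳 | τ B ≤ o}
  have hDmono : Monotone D := fun _ _ h => saturation_mono fun B hB => ⟨hB.1, hB.2.trans h⟩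
  have hmemD : ∀ A ∈ 𝒳, A ∈ D (τ A) := fun A hA => subset_saturation ⟨hA, le_rfl⟩
  let σ : Set α → Ordinal.{u} := fun A => sInf {o | A ∈ D o}
  have hσmem : ∀ A ∈ 𝒳, A ∈ D (σ A) := fun A hA =>
    show σ A ∈ {o | A ∈ D o} from csInf_mem ⟨_, hmemD A hA⟩
  have hσle : ∀ A ∈ 𝒳, σ A ≤ τ A := fun A hA => csInf_le' (hmemD A hA)
  refine ⟨σ, fun o => ?_, fun A hA => ?_⟩
  · rcases eq_empty_or_nonempty {A ∈ 𝒳 | σ A = o} with h | ⟨A, hA, rfl⟩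
    · rw [h, mk_eq_zero]
      exact aleph0_pos.trans h𝒳
    calc #{B ∈ 𝒳 | σ B = σ A} ≤ #(D (σ A)) :=
          mk_le_mk_of_subset fun B hB => hB.2 ▸ hσmem B hB.1
      _ ≤ max #{B ∈ 𝒳 | τ B ≤ σ A} ℵ₀ := had.mk_saturation_le hcount (sep_subset _ _)
      _ ≤ max #{B ∈ 𝒳 | τ B ≤ τ A} ℵ₀ := max_le_max_right _
          (mk_le_mk_of_subset fun B hB => ⟨hB.1, hB.2.trans (hσle A hA)⟩)
      _ < #𝒳 := max_lt (hτ A hA) h𝒳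
  · rcases isEmpty_or_nonempty (Iio (σ A)) with h | h
    · have hnone : {B ∈ 𝒳 | σ B < σ A} = ∅ :=
        eq_empty_of_forall_notMem fun B hB => h.false ⟨σ B, hB.2⟩
      simp [hnone]
    have hsat : IsSaturated n 𝒳 (⋃ o : Iio (σ A), D o) :=
      IsSaturated.iUnion (hDmono.comp (Subtype.mono_coe _)).directed_le
        fun _ => isSaturated_saturation
    have hA' : A ∉ ⋃ o : Iio (σ A), D o := by
      simp only [mem_iUnion, not_exists]
      exact fun o => notMem_of_lt_csInf' (s := {o | A ∈ D o}) o.2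
    exact (hsat.finite_inter_sUnion hA hA').subset (inter_subset_inter_right _
      (sUnion_mono fun B hB => mem_iUnion.2 ⟨⟨σ B, hB.2⟩, hσmem B hB.1⟩))

theorem essentiallyDisjoint (had : AlmostDisjoint n 𝒳) (hcount : ∀ A ∈ 𝒳, A.Countable) :
    EssentiallyDisjoint 𝒳 := by
  obtain ⟨κ, hκ⟩ : ∃ κ, #𝒳 = κ := ⟨_, rfl⟩
  induction κ using WellFoundedLT.induction generalizing 𝒳 with
  | _ κ ih =>
    subst hκ
    rcases le_or_gt #𝒳 ℵ₀ with hle | hlt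
    · exact .of_countable (le_aleph0_iff_set_countable.1 hle) had.pairwise_finite_inter
    obtain ⟨σ, hslice, hearlier⟩ := had.exists_rank hcount hlt
    exact .of_rank σ (fun o => ih _ (hslice o) (had.mono (sep_subset _ _))
      (fun A hA => hcount A hA.1) rfl) hearlier

end AlmostDisjoint

theorem essentially_disjoint_of_almost_disjoint_general {α : Type*} (n : ℕ)
    (𝒳 : Set (Set α)) (hcount : ∀ A ∈ 𝒳, A.Countable)
    (had : ∀ A ∈ 𝒳, ∀ B ∈ 𝒳, A ≠ B → Cardinal.mk ↥(A ∩ B) < (n : Cardinal)) :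
    ∃ F : Set α → Set α,
      (∀ A ∈ 𝒳, F A ⊆ A ∧ (F A).Finite) ∧
      (∀ A ∈ 𝒳, ∀ B ∈ 𝒳, A ≠ B → Disjoint (A \ F A) (B \ F B)) :=
  AlmostDisjoint.essentiallyDisjoint had hcount

/-- Every `n`-almost disjoint family of countable sets (i.e. `|A ∩ B| < n` for distinct
members) is essentially disjoint: one can remove a finite set from each member so that the
resulting family is pairwise disjoint. -/
theorem essentially_disjoint_of_almost_disjoint {α : Type*} (n : ℕ) (hn : 1 ≤ n)
    (𝒳 : Set (Set α)) (hcount : ∀ A ∈ 𝒳, A.Countable)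
    (had : ∀ A ∈ 𝒳, ∀ B ∈ 𝒳, A ≠ B → Cardinal.mk ↥(A ∩ B) < (n : Cardinal)) :
    ∃ F : Set α → Set α,
      (∀ A ∈ 𝒳, F A ⊆ A ∧ (F A).Finite) ∧
      (∀ A ∈ 𝒳, ∀ B ∈ 𝒳, A ≠ B → Disjoint (A \ F A) (B \ F B)) :=
  essentially_disjoint_of_almost_disjoint_general n 𝒳 hcount had
end

section
/- For each natural number n, if 2^ℵ₀ ≤ ℵ_n then there exist n + 2 points a₀, …, a_{n+1} ∈ ℝ² in general position (no three collinear) and sets A₀, …, A_{n+1} ⊆ ℝ² such that A_k is a cloud around a_k for each k < n + 2 and ℝ² = A₀ ∪ ⋯ ∪ A_{n+1}. -/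
/-- `A` is a cloud around `a` iff every (affine) line through `a`
intersects `A` in a finite set. Lines through `a` are parametrized as
`{a + t • v : t ∈ ℝ}` for a nonzero direction `v`. -/
def IsCloud (a : ℝ × ℝ) (A : Set (ℝ × ℝ)) : Prop :=
  ∀ v : ℝ × ℝ, v ≠ 0 → (A ∩ {p | ∃ t : ℝ, p = a + t • v}).Finite

/-!
The points are put on a parabola. A point `p` off all lines `a i a j` determines the edge
`{(i, direction of p - a i) | i}` of size `n + 2` on a vertex set of size `𝔠 ≤ ℵ_n`, and two such
edges share at most one vertex, since two common vertices would put `p` on a line `a i a j`.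
By induction on `n`, in every such linear hypergraph with edges of size `n + 2` on at most `ℵ_n`
vertices one can choose a vertex in each edge so that every vertex is chosen finitely often:
for `n = 0` choose the last vertex of the edge in an enumeration; for `n + 1` stratify the vertices
along an `ω_{n+1}`-chain of sets of size `ℵ_n` closed under "two vertices span their edge", so that
each edge has all but at most one of its vertices on its top level, and solve each level by the
induction hypothesis. A point `p` goes to the cloud of the index chosen in its edge: a line
through `a i` in direction `v` meets it only in points whose edge chose the vertex `(i, v)`.
A point on a line `a i a j` goes to the cloud of a third point `a k`; a line through `a k` meets
the line `a i a j` at most once.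
-/

open Cardinal Set
open scoped LinearAlgebra.Projectivization

universe u v

lemma Cardinal.mk_iUnion_le_of_le {α : Type u} {ι : Type v} {f : ι → Set α} {κ : Cardinal.{u}}
    (hκ : ℵ₀ ≤ κ) (hι : lift.{u} #ι ≤ lift.{v} κ) (hf : ∀ i, #(f i) ≤ κ) : #(⋃ i, f i) ≤ κ := by
  rw [← lift_le.{v}]
  calc lift.{v} #(⋃ i, f i) ≤ lift.{u} #ι * ⨆ i, lift.{v} #(f i) := mk_iUnion_le_lift f
    _ ≤ lift.{v} κ * lift.{v} κ := mul_le_mul' hι (ciSup_le' fun i ↦ lift_le.2 (hf i))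
    _ = lift.{v} κ := mul_eq_self (by simpa using hκ)

section Hypergraph

variable {V : Type u} {ι : Type v} (e : ι → Finset V)

def IsEdgeClosed (S : Set V) : Prop :=
  ∀ p, (↑(e p) ∩ S).Nontrivial → ↑(e p) ⊆ S

def edgeClosureStep (S : Set V) : Set V :=
  S ∪ ⋃ (p) (_ : (↑(e p) ∩ S).Nontrivial), ↑(e p)

def edgeClosure (S : Set V) : Set V :=
  ⋃ n, (edgeClosureStep e)^[n] S

variable {e}

lemma edge_eq_of_two_mem (he : Pairwise fun p q ↦ (↑(e p) ∩ ↑(e q) : Set V).Subsingleton)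
    {x y : V} (hxy : x ≠ y) {p q : ι} (hxp : x ∈ e p) (hyp : y ∈ e p) (hxq : x ∈ e q)
    (hyq : y ∈ e q) : p = q :=
  by_contra fun hpq ↦ hxy (he hpq ⟨hxp, hxq⟩ ⟨hyp, hyq⟩)

lemma subset_edgeClosureStep (S : Set V) : S ⊆ edgeClosureStep e S := subset_union_left

lemma edgeClosureStep_mono {S T : Set V} (h : S ⊆ T) : edgeClosureStep e S ⊆ edgeClosureStep e T :=
  union_subset_union h <|
    iUnion₂_mono' fun p hp ↦ ⟨p, hp.mono (inter_subset_inter_right _ h), le_rfl⟩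

lemma mk_edgeClosureStep_le (he : Pairwise fun p q ↦ (↑(e p) ∩ ↑(e q) : Set V).Subsingleton)
    {S : Set V} {κ : Cardinal.{u}} (hκ : ℵ₀ ≤ κ) (hS : #S ≤ κ) : #(edgeClosureStep e S) ≤ κ := by
  -- each pair of distinct vertices of `S` lies in at most one edge
  set pairSpan : S × S → Set V := fun xy ↦
    ⋃ p ∈ {p | xy.1 ≠ xy.2 ∧ (xy.1 : V) ∈ e p ∧ (xy.2 : V) ∈ e p}, ↑(e p)
  have hfin : ∀ xy, (pairSpan xy).Finite := fun xy ↦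
    Set.Finite.biUnion (Set.Subsingleton.finite fun p hp q hq ↦
      edge_eq_of_two_mem he (Subtype.coe_ne_coe.2 hp.1) hp.2.1 hp.2.2 hq.2.1 hq.2.2)
      fun p _ ↦ (e p).finite_toSet
  have hsub : edgeClosureStep e S ⊆ S ∪ ⋃ xy, pairSpan xy := by
    refine union_subset_union_right S (iUnion₂_subset fun p ⟨x, hx, y, hy, hxy⟩ ↦ ?_)
    exact subset_iUnion_of_subset (⟨x, hx.2⟩, ⟨y, hy.2⟩) <|
      subset_biUnion_of_mem (u := fun p ↦ (↑(e p) : Set V)) ⟨Subtype.coe_ne_coe.1 hxy, hx.1, hy.1⟩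
  refine (mk_le_mk_of_subset hsub).trans <| (mk_union_le _ _).trans ?_
  have hpairs : #(S × S) ≤ κ := by
    simpa only [mk_prod, lift_id, mul_eq_self hκ] using mul_le_mul' hS hS
  calc #S + #(⋃ xy, pairSpan xy) ≤ κ + κ := add_le_add hS <|
        mk_iUnion_le_of_le hκ (lift_le.2 hpairs) fun xy ↦ (hfin xy).lt_aleph0.le.trans hκ
    _ = κ := add_eq_self hκ

lemma monotone_iterate_edgeClosureStep (S : Set V) :
    Monotone fun n ↦ (edgeClosureStep e)^[n] S :=
  monotone_nat_of_le_succ fun n ↦ by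
    rw [Function.iterate_succ_apply']
    exact subset_edgeClosureStep _

lemma subset_edgeClosure (S : Set V) : S ⊆ edgeClosure e S :=
  subset_iUnion (fun n ↦ (edgeClosureStep e)^[n] S) 0

lemma edgeClosure_mono {S T : Set V} (h : S ⊆ T) : edgeClosure e S ⊆ edgeClosure e T :=
  iUnion_mono fun n ↦ by
    induction n with
    | zero => exact h
    | succ n ih =>
      simp only [Function.iterate_succ_apply']
      exact edgeClosureStep_mono ih

lemma isEdgeClosed_edgeClosure (S : Set V) : IsEdgeClosed e (edgeClosure e S) := by
  rintro p ⟨x, ⟨hxp, hx⟩, y, ⟨hyp, hy⟩, hxy⟩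
  obtain ⟨m, hxm⟩ := mem_iUnion.1 hx
  obtain ⟨n, hyn⟩ := mem_iUnion.1 hy
  have hmono := monotone_iterate_edgeClosureStep (e := e) S
  have hstep : ↑(e p) ⊆ edgeClosureStep e ((edgeClosureStep e)^[max m n] S) :=
    subset_union_of_subset_right (subset_iUnion₂ (s := fun p _ ↦ (↑(e p) : Set V)) p
      ⟨x, ⟨hxp, hmono (le_max_left m n) hxm⟩, y, ⟨hyp, hmono (le_max_right m n) hyn⟩, hxy⟩) _
  rw [← Function.iterate_succ_apply' (edgeClosureStep e)] at hstep
  exact hstep.trans (subset_iUnion (fun n ↦ (edgeClosureStep e)^[n] S) _)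

lemma mk_edgeClosure_le (he : Pairwise fun p q ↦ (↑(e p) ∩ ↑(e q) : Set V).Subsingleton)
    {S : Set V} {κ : Cardinal.{u}} (hκ : ℵ₀ ≤ κ) (hS : #S ≤ κ) : #(edgeClosure e S) ≤ κ := by
  refine mk_iUnion_le_of_le hκ (by simpa using hκ) fun n ↦ ?_
  induction n with
  | zero => exact hS
  | succ n ih =>
    rw [Function.iterate_succ_apply']
    exact mk_edgeClosureStep_le he hκ ih

def HasFiniteFiberChoice (e : ι → Finset V) : Prop :=
  ∃ f : ι → V, (∀ p, f p ∈ e p) ∧ ∀ v, (f ⁻¹' {v}).Finite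

lemma injective_of_pairwise_subsingleton
    (he : Pairwise fun p q ↦ (↑(e p) ∩ ↑(e q) : Set V).Subsingleton)
    (hcard : ∀ p, 2 ≤ (e p).card) : Function.Injective e := fun p q hpq ↦ by
  obtain ⟨x, hx, y, hy, hxy⟩ := Finset.one_lt_card.1 (hcard p)
  exact edge_eq_of_two_mem he hxy hx hy (hpq ▸ hx) (hpq ▸ hy)

lemma hasFiniteFiberChoice_of_countable [Countable V] (hne : ∀ p, (e p).Nonempty)
    (hinj : Function.Injective e) : HasFiniteFiberChoice e := by
  obtain ⟨g, hg⟩ := Countable.exists_injective_nat V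
  choose f hfe hfmax using fun p ↦ (e p).exists_max_image g (hne p)
  refine ⟨f, hfe, fun v ↦ ?_⟩
  have hbelow : {w | g w ≤ g v}.Finite := (finite_Iic (g v)).preimage hg.injOn
  refine (hbelow.finite_subsets.preimage (Finset.coe_injective.comp hinj).injOn).subset ?_
  rintro p (rfl : f p = v) w hw
  exact hfmax p w hw

lemma HasFiniteFiberChoice.of_levels {W : Type*} [DecidableEq W] (s : V → W) (b : ι → W)
    (h : ∀ δ, HasFiniteFiberChoice fun q : {p // b p = δ} ↦ (e q).subtype (s · = δ)) :
    HasFiniteFiberChoice e := by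
  choose f hfe hfin using h
  refine ⟨fun p ↦ f (b p) ⟨p, rfl⟩, fun p ↦ Finset.mem_subtype.1 (hfe _ _), fun v ↦ ?_⟩
  refine ((hfin (s v) ⟨v, rfl⟩).image Subtype.val).subset ?_
  rintro p (hp : (f (b p) ⟨p, rfl⟩ : V) = v)
  have hbp : b p = s v := hp ▸ (f (b p) ⟨p, rfl⟩).2.symm
  have hf : ∀ δ (hδ : b p = δ), (f δ ⟨p, hδ⟩ : V) = f (b p) ⟨p, rfl⟩ := by
    rintro _ rfl
    rfl
  exact ⟨⟨p, hbp⟩, Subtype.ext ((hf _ hbp).trans hp), rfl⟩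

lemma card_le_card_filter_eq_sup'_add_one {W : Type*} [LinearOrder W] (s : V → W)
    (hs : ∀ x, IsEdgeClosed e {v | s v ≤ x}) (p : ι) (hp : (e p).Nonempty) :
    (e p).card ≤ ((e p).filter fun v ↦ s v = (e p).sup' hp s).card + 1 := by
  rw [← Finset.card_filter_add_card_filter_not (fun v ↦ s v = (e p).sup' hp s)]
  gcongr
  refine Finset.card_le_one.2 fun v hv w hw ↦ by_contra fun hvw ↦ ?_
  rw [Finset.mem_filter] at hv hw
  have hclosed := hs (max (s v) (s w)) p
    ⟨v, ⟨hv.1, le_max_left _ _⟩, w, ⟨hw.1, le_max_right _ _⟩, hvw⟩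
  have hsup : (e p).sup' hp s ≤ max (s v) (s w) := Finset.sup'_le _ _ fun u hu ↦ hclosed hu
  exact hsup.not_gt <| max_lt ((Finset.le_sup' s hv.1).lt_of_ne hv.2)
    ((Finset.le_sup' s hw.1).lt_of_ne hw.2)

lemma Monotone.exists_setOf_le_eq {W α : Type*} [LinearOrder W] [WellFoundedLT W]
    {F : W → Set α} (hF : Monotone F) (hcover : ∀ a, ∃ x, a ∈ F x) :
    ∃ s : α → W, ∀ x, {a | s a ≤ x} = F x := by
  have hwf : WellFounded ((· < ·) : W → W → Prop) := wellFounded_lt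
  refine ⟨fun a ↦ hwf.min {x | a ∈ F x} (hcover a), fun x ↦ ?_⟩
  ext a
  exact ⟨fun h ↦ hF h (hwf.min_mem {x | a ∈ F x} (hcover a)), fun h ↦ hwf.min_le h⟩

lemma mk_Iic_toType_ord_succ_le {κ : Cardinal} (hκ : ℵ₀ ≤ κ) (x : (Order.succ κ).ord.ToType) :
    #(Iic x) ≤ κ := by
  rw [← Order.lt_succ_iff, ← Iio_insert]
  refine mk_insert_le.trans_lt <| add_lt_of_lt (hκ.trans (Order.le_succ κ)) ?_ ?_
  · simpa using mk_Iio_lt x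
  · exact one_lt_aleph0.trans_le (hκ.trans (Order.le_succ κ))

lemma exists_isEdgeClosed_levels
    (he : Pairwise fun p q ↦ (↑(e p) ∩ ↑(e q) : Set V).Subsingleton)
    {κ : Cardinal.{u}} (hκ : ℵ₀ ≤ κ) (hV : #V ≤ Order.succ κ) :
    ∃ s : V → (Order.succ κ).ord.ToType,
      ∀ x, IsEdgeClosed e {v | s v ≤ x} ∧ #{v | s v ≤ x} ≤ κ := by
  obtain ⟨g⟩ := (le_def V (Order.succ κ).ord.ToType).1 (by rwa [mk_toType, card_ord])
  have hmono : Monotone fun x ↦ edgeClosure e (g ⁻¹' Iic x) :=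
    fun x y hxy ↦ edgeClosure_mono fun v hv ↦ le_trans hv hxy
  obtain ⟨s, hs⟩ := hmono.exists_setOf_le_eq fun v ↦
    ⟨g v, subset_edgeClosure (g ⁻¹' Iic (g v)) (le_refl (g v))⟩
  refine ⟨s, fun x ↦ hs x ▸ ⟨isEdgeClosed_edgeClosure _, mk_edgeClosure_le he hκ ?_⟩⟩
  exact (mk_preimage_of_injective _ _ g.injective).trans (mk_Iic_toType_ord_succ_le hκ x)

theorem hasFiniteFiberChoice_of_mk_le_aleph (t : ℕ) (hV : #V ≤ ℵ_ t)
    (hcard : ∀ p, t + 2 ≤ (e p).card)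
    (he : Pairwise fun p q ↦ (↑(e p) ∩ ↑(e q) : Set V).Subsingleton) :
    HasFiniteFiberChoice e := by
  induction t generalizing V ι with
  | zero =>
    have : Countable V := mk_le_aleph0_iff.1 (by simpa using hV)
    exact hasFiniteFiberChoice_of_countable (fun p ↦ Finset.card_pos.1 (by linarith [hcard p]))
      (injective_of_pairwise_subsingleton he hcard)
  | succ t ih =>
    classical
    have hne p : (e p).Nonempty := Finset.card_pos.1 (by linarith [hcard p])
    obtain ⟨s, hs⟩ := exists_isEdgeClosed_levels he (aleph0_le_aleph t)
      (by rwa [Nat.cast_succ, ← succ_aleph] at hV)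
    refine HasFiniteFiberChoice.of_levels s (fun p ↦ (e p).sup' (hne p) s) fun δ ↦ ?_
    refine ih ((mk_subtype_mono fun v (hv : s v = δ) ↦ hv.le).trans (hs δ).2)
      (fun q ↦ ?_) (fun q q' hqq' v hv w hw ↦ ?_)
    · obtain ⟨p, rfl⟩ := q
      rw [Finset.card_subtype]
      linarith [hcard p, card_le_card_filter_eq_sup'_add_one s (fun x ↦ (hs x).1) p (hne p)]
    · simp only [mem_inter_iff, Finset.mem_coe, Finset.mem_subtype] at hv hw
      exact Subtype.ext <| he (fun h ↦ hqq' (Subtype.ext h)) hv hw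

end Hypergraph

section Collinear

variable {K V : Type*} [Field K] [AddCommGroup V] [Module K V]

lemma collinear_of_eq_add_smul {z p q v : V} {s r : K} (hp : p = z + s • v) (hq : q = z + r • v) :
    Collinear K {z, p, q} := by
  rw [collinear_iff_of_mem (mem_insert z _)]
  refine ⟨v, ?_⟩
  rintro x (rfl | rfl | rfl)
  · exact ⟨0, by simp⟩
  · exact ⟨s, by rw [hp, vadd_eq_add, add_comm]⟩
  · exact ⟨r, by rw [hq, vadd_eq_add, add_comm]⟩

lemma collinear_of_mk_sub_eq_mk_sub {z p q : V} (hp : p - z ≠ 0) (hq : q - z ≠ 0)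
    (h : Projectivization.mk K (p - z) hp = Projectivization.mk K (q - z) hq) :
    Collinear K {z, p, q} := by
  obtain ⟨r, hr⟩ := (Projectivization.mk_eq_mk_iff' K _ _ hp hq).1 h
  exact collinear_of_eq_add_smul (s := r) (r := 1) (v := q - z) (by rw [hr]; abel)
    (by rw [one_smul]; abel)

lemma mk_sub_eq_mk_of_eq_add_smul {z p v : V} {s : K} (h : p = z + s • v) (hp : p - z ≠ 0)
    (hv : v ≠ 0) : Projectivization.mk K (p - z) hp = Projectivization.mk K v hv :=
  (Projectivization.mk_eq_mk_iff' K _ _ hp hv).2 ⟨s, by rw [h, add_sub_cancel_left]⟩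

lemma mem_affineSpan_pair_of_collinear {x y p q : V} (hxy : x ≠ y) (hpq : p ≠ q)
    (hx : Collinear K {x, p, q}) (hy : Collinear K {y, p, q}) : p ∈ line[K, x, y] := by
  have hx' : x ∈ line[K, p, q] := hx.mem_affineSpan_of_mem_of_ne (by simp) (by simp) (by simp) hpq
  have hy' : y ∈ line[K, p, q] := hy.mem_affineSpan_of_mem_of_ne (by simp) (by simp) (by simp) hpq
  exact (collinear_insert_insert_of_mem_affineSpan_pair hx' hy').mem_affineSpan_of_mem_of_ne
    (by simp) (by simp) (by simp) hxy

lemma mem_affineSpan_pair_of_collinear_of_mem {x y z p q : V} (hpq : p ≠ q)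
    (hp : p ∈ line[K, x, y]) (hq : q ∈ line[K, x, y]) (hz : Collinear K {z, p, q}) :
    z ∈ line[K, x, y] :=
  affineSpan_pair_le_of_mem_of_mem hp hq <|
    hz.mem_affineSpan_of_mem_of_ne (by simp) (by simp) (by simp) hpq

end Collinear

lemma IsCloud.union {a : ℝ × ℝ} {A B : Set (ℝ × ℝ)} (hA : IsCloud a A) (hB : IsCloud a B) :
    IsCloud a (A ∪ B) := fun v hv ↦ by
  rw [union_inter_distrib_right]
  exact (hA v hv).union (hB v hv)

lemma mk_fin_prod_projectivization_le (m : ℕ) : #(Fin m × ℙ ℝ (ℝ × ℝ)) ≤ 𝔠 := by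
  have hℙ : #(ℙ ℝ (ℝ × ℝ)) ≤ 𝔠 :=
    calc #(ℙ ℝ (ℝ × ℝ)) ≤ #{v : ℝ × ℝ // v ≠ 0} := mk_quotient_le
      _ ≤ #(ℝ × ℝ) := mk_subtype_le _
      _ = 𝔠 := by simp [mk_real]
  calc #(Fin m × ℙ ℝ (ℝ × ℝ)) ≤ 𝔠 * 𝔠 := by
        simpa using mul_le_mul' (nat_lt_continuum m).le hℙ
    _ = 𝔠 := continuum_mul_self

section Plane

variable {t : ℕ} {a : Fin (t + 2) → ℝ × ℝ}

def offLines (a : Fin (t + 2) → ℝ × ℝ) : Set (ℝ × ℝ) :=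
  {p | ∀ i j, i ≠ j → p ∉ line[ℝ, a i, a j]}

lemma sub_ne_zero_of_mem_offLines {p : ℝ × ℝ} (hp : p ∈ offLines a) (i : Fin (t + 2)) :
    p - a i ≠ 0 := by
  obtain ⟨j, hji⟩ := exists_ne i
  rw [sub_ne_zero]
  rintro rfl
  exact hp i j hji.symm (left_mem_affineSpan_pair ℝ _ _)

noncomputable def lineDirection (p : offLines a) (i : Fin (t + 2)) : ℙ ℝ (ℝ × ℝ) :=
  Projectivization.mk ℝ (p.1 - a i) (sub_ne_zero_of_mem_offLines p.2 i)

noncomputable def directionEdge (p : offLines a) : Finset (Fin (t + 2) × ℙ ℝ (ℝ × ℝ)) :=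
  Finset.univ.map ⟨fun i ↦ (i, lineDirection p i), fun _ _ h ↦ (Prod.ext_iff.1 h).1⟩

lemma mem_directionEdge {p : offLines a} {x : Fin (t + 2) × ℙ ℝ (ℝ × ℝ)} :
    x ∈ directionEdge p ↔ x.2 = lineDirection p x.1 := by
  simp only [directionEdge, Finset.mem_map, Finset.mem_univ, true_and]
  exact ⟨by rintro ⟨i, rfl⟩; rfl, fun h ↦ ⟨x.1, Prod.ext rfl h.symm⟩⟩

lemma card_directionEdge (p : offLines a) : (directionEdge p).card = t + 2 := by
  simp [directionEdge]

lemma pairwise_subsingleton_inter_directionEdge (hinj : Function.Injective a) :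
    Pairwise fun p q : offLines a ↦
      (↑(directionEdge p) ∩ ↑(directionEdge q) : Set (Fin (t + 2) × ℙ ℝ (ℝ × ℝ))).Subsingleton := by
  rintro p q hpq x ⟨hxp, hxq⟩ y ⟨hyp, hyq⟩
  simp only [Finset.mem_coe, mem_directionEdge] at hxp hxq hyp hyq
  by_contra hxy
  have hij : x.1 ≠ y.1 := fun h ↦ hxy (Prod.ext h (by rw [hxp, hyp, h]))
  have hcol : ∀ i, lineDirection p i = lineDirection q i → Collinear ℝ {a i, p.1, q.1} :=
    fun i ↦ collinear_of_mk_sub_eq_mk_sub _ _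
  exact p.2 x.1 y.1 hij <| mem_affineSpan_pair_of_collinear (hinj.ne hij)
    (Subtype.coe_ne_coe.2 hpq) (hcol _ (hxp ▸ hxq)) (hcol _ (hyp ▸ hyq))

lemma exists_isCloud_offLines (hinj : Function.Injective a) (hc : (𝔠 : Cardinal.{0}) ≤ ℵ_ t) :
    ∃ c : offLines a → Fin (t + 2), ∀ i, IsCloud (a i) (Subtype.val '' (c ⁻¹' {i})) := by
  obtain ⟨f, hfe, hfin⟩ := hasFiniteFiberChoice_of_mk_le_aleph t
    ((mk_fin_prod_projectivization_le _).trans hc) (fun p ↦ (card_directionEdge p).ge)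
    (pairwise_subsingleton_inter_directionEdge hinj)
  refine ⟨fun p ↦ (f p).1, fun i v hv ↦ ((hfin (i, .mk ℝ v hv)).image Subtype.val).subset ?_⟩
  rintro _ ⟨⟨p, rfl : (f p).1 = i, rfl⟩, s, hs⟩
  refine ⟨p, Prod.ext rfl ?_, rfl⟩
  rw [mem_directionEdge.1 (hfe p)]
  exact mk_sub_eq_mk_of_eq_add_smul hs _ hv

lemma exists_isCloud_compl_offLines (h3 : ∀ i j : Fin (t + 2), ∃ k, k ≠ i ∧ k ≠ j)
    (hgp : ∀ i j k, i ≠ j → k ≠ i → k ≠ j → a k ∉ line[ℝ, a i, a j]) :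
    ∃ c : ↥(offLines a)ᶜ → Fin (t + 2), ∀ k, IsCloud (a k) (Subtype.val '' (c ⁻¹' {k})) := by
  have hpair (p : ↥(offLines a)ᶜ) : ∃ i j, i ≠ j ∧ p.1 ∈ line[ℝ, a i, a j] := by
    simpa [offLines] using p.2
  choose i j hij hp using hpair
  choose c hci hcj using fun p ↦ h3 (i p) (j p)
  refine ⟨c, fun k v hv ↦ ?_⟩
  have hsub (ij : Fin (t + 2) × Fin (t + 2)) : {p | (∃ s : ℝ, p = a k + s • v) ∧ ij.1 ≠ ij.2 ∧
      k ≠ ij.1 ∧ k ≠ ij.2 ∧ p ∈ line[ℝ, a ij.1, a ij.2]}.Subsingleton := by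
    rintro x ⟨⟨r, hx⟩, hne, hki, hkj, hxl⟩ y ⟨⟨s, hy⟩, -, -, -, hyl⟩
    by_contra hxy
    exact hgp _ _ k hne hki hkj <|
      mem_affineSpan_pair_of_collinear_of_mem hxy hxl hyl (collinear_of_eq_add_smul hx hy)
  refine (finite_iUnion fun ij ↦ (hsub ij).finite).subset ?_
  rintro _ ⟨⟨p, rfl : c p = k, rfl⟩, hpL⟩
  exact mem_iUnion.2 ⟨(i p, j p), hpL, hij p, hci p, hcj p, hp p⟩

theorem exists_isCloud_cover (a : Fin (t + 2) → ℝ × ℝ)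
    (ha : ∀ i j k, i ≠ j → j ≠ k → i ≠ k → ¬ Collinear ℝ {a i, a j, a k})
    (hc : (𝔠 : Cardinal.{0}) ≤ ℵ_ t) :
    ∃ A : Fin (t + 2) → Set (ℝ × ℝ), (∀ k, IsCloud (a k) (A k)) ∧ ⋃ k, A k = Set.univ := by
  have ht : 2 < t + 2 := by
    rcases t with _ | t
    · exact absurd hc (by simpa using aleph0_lt_continuum)
    · omega
  have h3 (i j : Fin (t + 2)) : ∃ k, k ≠ i ∧ k ≠ j := Fin.exists_ne_and_ne_of_two_lt i j ht
  have hinj : Function.Injective a := fun i j hij ↦ by_contra fun hne ↦ by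
    obtain ⟨k, hki, hkj⟩ := h3 i j
    exact ha i j k hne hkj.symm hki.symm (by simp [hij, collinear_pair])
  have hgp i j k (hij : i ≠ j) (hki : k ≠ i) (hkj : k ≠ j) : a k ∉ line[ℝ, a i, a j] :=
    fun h ↦ ha k i j hki hij hkj (collinear_insert_of_mem_affineSpan_pair h)
  obtain ⟨c₁, hc₁⟩ := exists_isCloud_offLines hinj hc
  obtain ⟨c₂, hc₂⟩ := exists_isCloud_compl_offLines h3 hgp
  refine ⟨fun k ↦ Subtype.val '' (c₁ ⁻¹' {k}) ∪ Subtype.val '' (c₂ ⁻¹' {k}),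
    fun k ↦ (hc₁ k).union (hc₂ k), eq_univ_of_forall fun p ↦ mem_iUnion.2 ?_⟩
  by_cases hp : p ∈ offLines a
  · exact ⟨c₁ ⟨p, hp⟩, Or.inl ⟨⟨p, hp⟩, rfl, rfl⟩⟩
  · exact ⟨c₂ ⟨p, hp⟩, Or.inr ⟨⟨p, hp⟩, rfl, rfl⟩⟩

end Plane

lemma not_collinear_parabola {x y z : ℝ} (hxy : x ≠ y) (hyz : y ≠ z) (hxz : x ≠ z) :
    ¬ Collinear ℝ {(x, x ^ 2), (y, y ^ 2), (z, z ^ 2)} := by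
  rw [collinear_iff_of_mem (mem_insert _ _)]
  rintro ⟨w, hw⟩
  obtain ⟨r, hr⟩ := hw (y, y ^ 2) (by simp)
  obtain ⟨s, hs⟩ := hw (z, z ^ 2) (by simp)
  simp only [Prod.ext_iff, vadd_eq_add, Prod.fst_add, Prod.snd_add, Prod.smul_fst, Prod.smul_snd,
    smul_eq_mul] at hr hs
  have : (y - x) * (z - x) * (z - y) = 0 := by
    linear_combination (z ^ 2 - x ^ 2) * hr.1 + r * w.1 * hs.2 - (z - x) * hr.2 - r * w.2 * hs.1
  simp [sub_eq_zero, hxy.symm, hxz.symm, hyz.symm] at this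

/-- If the continuum is at most `ℵ_n`, then the plane is the union of `n + 2` clouds
around `n + 2` points in general position (no three collinear). -/
theorem plane_union_clouds_of_continuum_le (n : ℕ)
    (h : (2 : Cardinal) ^ Cardinal.aleph0 ≤ Cardinal.aleph n) :
    ∃ (a : Fin (n + 2) → ℝ × ℝ) (A : Fin (n + 2) → Set (ℝ × ℝ)),
      (∀ i j k : Fin (n + 2), i ≠ j → j ≠ k → i ≠ k →
        ¬ Collinear ℝ ({a i, a j, a k} : Set (ℝ × ℝ))) ∧
      (∀ k, IsCloud (a k) (A k)) ∧ (⋃ k, A k) = Set.univ := by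
  have hc : (𝔠 : Cardinal.{0}) ≤ ℵ_ n := by
    rwa [two_power_aleph0, ← lift_continuum.{_, 0}, lift_le_aleph_natCast] at h
  let a : Fin (n + 2) → ℝ × ℝ := fun k ↦ ((k : ℝ), (k : ℝ) ^ 2)
  have ha : ∀ i j k, i ≠ j → j ≠ k → i ≠ k → ¬ Collinear ℝ {a i, a j, a k} :=
    fun i j k hij hjk hik ↦ not_collinear_parabola (by simpa [Fin.val_inj] using hij)
      (by simpa [Fin.val_inj] using hjk) (by simpa [Fin.val_inj] using hik)
  obtain ⟨A, hA, hcover⟩ := exists_isCloud_cover a ha hc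
  exact ⟨a, A, ha, hA, hcover⟩
end

section
/- Suppose G = (V, E) is a graph, μ is an ordinal, and {A_ξ : ξ < μ} is a cover of V such that each induced subgraph G[A_ξ] has countable chromatic number, and such that for every ξ < μ and every x ∈ A_ξ \ ⋃_{ζ<ξ} A_ζ, the set N_G(x) ∩ ⋃_{ζ<ξ} A_ζ is finite. Then G has countable chromatic number (there is a proper coloring of G with countably many colors). -/
/-!
Let `ι v` be the least index `ξ < μ` with `v ∈ A ξ`. An edge whose endpoints have the same first
index lies inside the piece `A ξ` and is separated by that piece's coloring. Every other edge is
oriented by `ι`, and each vertex has only finitely many neighbours of smaller first index, so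
coloring greedily along the well-founded order `ι` separates these edges with colors in `ℕ`.
The pair of the two colors, coded in `ℕ`, is a proper coloring of `G`.
-/

namespace SimpleGraph

variable {V α β : Type*}

def Coloring.supProd {G H : SimpleGraph V} (C : G.Coloring α) (D : H.Coloring β) :
    (G ⊔ H).Coloring (α × β) :=
  Coloring.mk (fun v => (C v, D v)) fun hadj heq =>
    hadj.elim (fun h => C.valid h (congrArg Prod.fst heq))
      (fun h => D.valid h (congrArg Prod.snd heq))

variable (G : SimpleGraph V)

theorem le_inf_fromRel_lt_sup_inf_fromRel_eq {ι : Type*} [LinearOrder ι] (f : V → ι) :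
    G ≤ G ⊓ fromRel (fun v w => f v < f w) ⊔ G ⊓ fromRel (fun v w => f v = f w) := by
  intro v w hadj
  rcases lt_trichotomy (f v) (f w) with h | h | h
  · exact Or.inl ⟨hadj, hadj.ne, Or.inl h⟩
  · exact Or.inr ⟨hadj, hadj.ne, Or.inl h⟩
  · exact Or.inl ⟨hadj, hadj.ne, Or.inr h⟩

theorem nonempty_coloring_inf_fromRel_of_finite {r : V → V → Prop} (hr : WellFounded r)
    (hfin : ∀ v, {w | G.Adj v w ∧ r w v}.Finite) : Nonempty ((G ⊓ fromRel r).Coloring ℕ) := by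
  let c : V → ℕ := hr.fix fun v c => sInf {n | ∀ w (h : r w v), G.Adj v w → c w h ≠ n}
  have hc : ∀ v, ∀ w, r w v → G.Adj v w → c w ≠ c v := by
    intro v
    rw [show c v = _ from hr.fix_eq _ v]
    -- only the finitely many colors of smaller neighbours are excluded
    obtain ⟨n, hn⟩ := ((hfin v).image c).infinite_compl.nonempty
    exact Nat.sInf_mem (s := {n | ∀ w, r w v → G.Adj v w → c w ≠ n})
      ⟨n, fun w hrw hadj hcw => hn ⟨w, ⟨hadj, hrw⟩, hcw⟩⟩
  refine ⟨Coloring.mk c ?_⟩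
  rintro v w ⟨hadj, -, hvw | hwv⟩ heq
  · exact hc w v hvw hadj.symm heq
  · exact hc v w hwv hadj heq.symm

def coloringInfFromRelEq {ι : Type*} (f : V → ι) (S : ι → Set V) (hS : ∀ v, v ∈ S (f v))
    (C : ∀ i, (G.induce (S i)).Coloring α) : (G ⊓ fromRel (fun v w => f v = f w)).Coloring α :=
  Coloring.mk (fun v => C (f v) ⟨v, hS v⟩) fun {v w} ⟨hadj, _, hvw⟩ => by
    have key : ∀ i j (hv : v ∈ S i) (hw : w ∈ S j), i = j → C i ⟨v, hv⟩ ≠ C j ⟨w, hw⟩ := by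
      rintro i _ hv hw rfl
      exact (C i).valid hadj
    exact key _ _ _ _ (hvw.elim id Eq.symm)

end SimpleGraph

theorem exists_least_index_of_iUnion_eq_univ {ι V : Type*} [LinearOrder ι] [WellFoundedLT ι]
    (A : ι → Set V) (hA : ⋃ i, A i = Set.univ) :
    ∃ f : V → ι, ∀ v, v ∈ A (f v) ∧ ∀ i < f v, v ∉ A i := by
  have hne : ∀ v, {i | v ∈ A i}.Nonempty := fun v => Set.mem_iUnion.mp (hA ▸ Set.mem_univ v)
  exact ⟨fun v => wellFounded_lt.min {i | v ∈ A i} (hne v), fun v =>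
    ⟨wellFounded_lt.min_mem _ (hne v), fun _ hi hv =>
      wellFounded_lt.not_lt_min {i | v ∈ A i} hv hi⟩⟩

/-- If a graph `G` is covered by an ordinal-indexed family `{A ξ : ξ < μ}` of sets,
each of countable chromatic number, such that every vertex appearing first in `A ξ`
has only finitely many neighbors among the earlier sets, then `G` has countable
chromatic number. -/
theorem countably_chromatic_of_good_ordering {V : Type*} (G : SimpleGraph V)
    (μ : Ordinal) (A : Ordinal → Set V)
    (hcover : ⋃ ξ ∈ Set.Iio μ, A ξ = Set.univ)
    (hcc : ∀ ξ < μ, Nonempty ((G.induce (A ξ)).Coloring ℕ))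
    (hfin : ∀ ξ < μ, ∀ x ∈ A ξ \ ⋃ ζ ∈ Set.Iio ξ, A ζ,
      (G.neighborSet x ∩ ⋃ ζ ∈ Set.Iio ξ, A ζ).Finite) :
    Nonempty (G.Coloring ℕ) := by
  obtain ⟨ι, hι⟩ := exists_least_index_of_iUnion_eq_univ (fun ξ : Set.Iio μ => A ξ)
    (by rwa [Set.biUnion_eq_iUnion] at hcover)
  have hlower : ∀ v, {w | G.Adj v w ∧ ι w < ι v}.Finite := by
    intro v
    have hnew : v ∉ ⋃ ζ ∈ Set.Iio (ι v : Ordinal), A ζ := by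
      simp only [Set.mem_iUnion, Set.mem_Iio, not_exists]
      exact fun ζ hζ => (hι v).2 ⟨ζ, hζ.trans (ι v).2⟩ hζ
    refine (hfin _ (ι v).2 v ⟨(hι v).1, hnew⟩).subset fun w ⟨hadj, hlt⟩ => ⟨hadj, ?_⟩
    exact Set.mem_biUnion (Subtype.coe_lt_coe.mpr hlt) (hι w).1
  obtain ⟨D⟩ := G.nonempty_coloring_inf_fromRel_of_finite (InvImage.wf ι wellFounded_lt) hlower
  let C := G.coloringInfFromRelEq ι (fun ξ => A ξ) (fun v => (hι v).1) fun ξ => (hcc ξ ξ.2).some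
  exact ⟨G.recolorOfEquiv Nat.pairEquiv
    ((D.supProd C).comp (SimpleGraph.Hom.ofLE (G.le_inf_fromRel_lt_sup_inf_fromRel_eq ι)))⟩
end

section
/- Let G be a graph, n ≥ 1 a natural number, and let A, A' be two distinct maximal n-connected sets of vertices of G. Then |A ∩ A'| < n. -/
/-- A set `A` of vertices spans an `n`-connected subgraph of `G` iff for every
`F ⊆ A` with `|F| < n`, the subgraph of `G` induced on `A \ F` is connected. -/
def SpansNConnected {V : Type*} (G : SimpleGraph V) (n : ℕ) (A : Set V) : Prop :=
  ∀ F : Finset V, ↑F ⊆ A → F.card < n → (G.induce (A \ ↑F)).Connected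

/-- `A` is a maximal `n`-connected set iff it spans an `n`-connected subgraph and no
proper superset of it does. -/
def MaximalNConnected {V : Type*} (G : SimpleGraph V) (n : ℕ) (A : Set V) : Prop :=
  SpansNConnected G n A ∧ ∀ B : Set V, A ⊆ B → SpansNConnected G n B → B = A

/-!
If `A` and `B` span `n`-connected subgraphs and share at least `n` vertices, then deleting
fewer than `n` vertices from `A ∪ B` leaves a common vertex, through which the connected
remainders of `A` and `B` are joined; so `A ∪ B` spans an `n`-connected subgraph too, and
maximality forces `A = A ∪ B = B`.
-/

namespace SpansNConnected

variable {V : Type*} {G : SimpleGraph V} {n : ℕ} {A B : Set V}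

theorem connected_induce_diff (hA : SpansNConnected G n A) (F : Finset V) (hF : F.card < n) :
    (G.induce (A \ ↑F)).Connected := by
  classical
  have hdiff : A \ ↑(F.filter (· ∈ A)) = A \ ↑F := by
    ext; simp only [Set.mem_sdiff, Finset.coe_filter, Set.mem_ofPred_eq]; tauto
  rw [← hdiff]
  exact hA _ (fun _ hx ↦ (Finset.mem_filter.mp hx).2)
    ((Finset.card_filter_le _ _).trans_lt hF)

theorem union (hA : SpansNConnected G n A) (hB : SpansNConnected G n B)
    (hAB : (n : Cardinal) ≤ Cardinal.mk ↥(A ∩ B)) : SpansNConnected G n (A ∪ B) := by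
  intro F _ hF
  have hcommon : ((A ∩ B) \ ↑F).Nonempty := by
    refine Set.sdiff_nonempty.mpr fun hsub ↦ hF.not_ge ?_
    have := hAB.trans (Cardinal.mk_le_mk_of_subset hsub)
    rwa [Finset.coe_sort_coe, Cardinal.mk_coe_finset, Nat.cast_le] at this
  obtain ⟨x, hxAB, hxF⟩ := hcommon
  rw [Set.union_sdiff_distrib]
  exact SimpleGraph.induce_union_connected (hA.connected_induce_diff F hF).preconnected
    (hB.connected_induce_diff F hF).preconnected ⟨x, ⟨hxAB.1, hxF⟩, ⟨hxAB.2, hxF⟩⟩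

end SpansNConnected

theorem MaximalNConnected.eq_of_le_mk_inter {V : Type*} {G : SimpleGraph V} {n : ℕ}
    {A B : Set V} (hA : MaximalNConnected G n A) (hB : MaximalNConnected G n B)
    (hAB : (n : Cardinal) ≤ Cardinal.mk ↥(A ∩ B)) : A = B := by
  have hunion := hA.1.union hB.1 hAB
  exact (hA.2 _ Set.subset_union_left hunion).symm.trans (hB.2 _ Set.subset_union_right hunion)

theorem maximal_nconnected_inter_lt_general {V : Type*} (G : SimpleGraph V) (n : ℕ)
    (A A' : Set V) (hA : MaximalNConnected G n A) (hA' : MaximalNConnected G n A')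
    (hne : A ≠ A') :
    Cardinal.mk ↥(A ∩ A') < (n : Cardinal) :=
  lt_of_not_ge fun h ↦ hne (hA.eq_of_le_mk_inter hA' h)

/-- Two distinct maximal `n`-connected sets meet in fewer than `n` vertices. -/
theorem maximal_nconnected_inter_lt {V : Type*} (G : SimpleGraph V) (n : ℕ) (hn : 1 ≤ n)
    (A A' : Set V) (hA : MaximalNConnected G n A) (hA' : MaximalNConnected G n A')
    (hne : A ≠ A') :
    Cardinal.mk ↥(A ∩ A') < (n : Cardinal) :=
  maximal_nconnected_inter_lt_general G n A A' hA hA' hne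
end

section
/- Let G be a graph, n ≥ 1 a natural number, A a maximal n-connected set of vertices of G, and x a vertex of G with x ∉ A. Then x has fewer than n neighbors in A, i.e., |N_G(x) ∩ A| < n. -/
/-!
If `x ∉ A` had at least `n` neighbours in `A`, then `insert x A` would still span an
`n`-connected subgraph: deleting fewer than `n` vertices either deletes `x`, leaving `A` minus
fewer than `n` vertices, or keeps `x` together with one of its neighbours in the connected rest
of `A`. This contradicts the maximality of `A`.
-/

open Cardinal

lemma Set.exists_mem_notMem_finset_of_card_lt {α : Type*} {S : Set α} {F : Finset α} {n : ℕ}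
    (hS : (n : Cardinal) ≤ #S) (hF : F.card < n) : ∃ s ∈ S, s ∉ F := by
  refine Set.not_subset.mp fun hSF => ?_
  have hle : #S ≤ F.card := by simpa using mk_le_mk_of_subset hSF
  exact absurd (hS.trans hle) (by exact_mod_cast hF.not_ge)

namespace SimpleGraph

variable {V : Type*} {G : SimpleGraph V}

lemma Connected.induce_insert_of_adj {S : Set V} (hS : (G.induce S).Connected) {x s : V}
    (hs : s ∈ S) (hadj : G.Adj x s) : (G.induce (insert x S)).Connected := by
  rw [← Set.singleton_union]
  exact connected_induce_union (by simp) hS.preconnected (Set.mem_singleton x) hs hadj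

end SimpleGraph

lemma SpansNConnected.insert {V : Type*} {G : SimpleGraph V} {n : ℕ} {A : Set V}
    (hA : SpansNConnected G n A) {x : V} (hx : x ∉ A)
    (hdeg : (n : Cardinal) ≤ #↥(G.neighborSet x ∩ A)) : SpansNConnected G n (insert x A) := by
  classical
  intro F hF hFn
  by_cases hxF : x ∈ F
  · have hF' : ↑(F.erase x) ⊆ A := fun y hy =>
      (hF (Finset.mem_of_mem_erase hy)).resolve_left (Finset.ne_of_mem_erase hy)
    have hA' := hA (F.erase x) hF' ((Finset.card_erase_lt_of_mem hxF).trans hFn)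
    rwa [Set.insert_sdiff_of_mem _ (Finset.mem_coe.mpr hxF), ← Finset.insert_erase hxF,
      Finset.coe_insert, Set.sdiff_insert_of_notMem hx]
  · have hF' : ↑F ⊆ A := fun y hy => (hF hy).resolve_left (by rintro rfl; exact hxF hy)
    obtain ⟨s, ⟨hxs, hsA⟩, hsF⟩ := Set.exists_mem_notMem_finset_of_card_lt hdeg hFn
    rw [Set.insert_sdiff_of_notMem _ (Finset.mem_coe.not.mpr hxF)]
    exact (hA F hF' hFn).induce_insert_of_adj ⟨hsA, hsF⟩ hxs

theorem maximal_nconnected_neighbors_lt_general {V : Type*} (G : SimpleGraph V) (n : ℕ)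
    (A : Set V) (hA : MaximalNConnected G n A) (x : V) (hx : x ∉ A) :
    Cardinal.mk ↥(G.neighborSet x ∩ A) < (n : Cardinal) := by
  by_contra! hdeg
  have hxA : insert x A = A := hA.2 _ (Set.subset_insert x A) (hA.1.insert hx hdeg)
  exact hx (hxA ▸ Set.mem_insert x A)

/-- A vertex outside a maximal `n`-connected set `A` has fewer than `n` neighbors
in `A`. -/
theorem maximal_nconnected_neighbors_lt {V : Type*} (G : SimpleGraph V) (n : ℕ)
    (hn : 1 ≤ n) (A : Set V) (hA : MaximalNConnected G n A) (x : V) (hx : x ∉ A) :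
    Cardinal.mk ↥(G.neighborSet x ∩ A) < (n : Cardinal) :=
  maximal_nconnected_neighbors_lt_general G n A hA x hx
end

section
/- Let G be a graph and n ≥ 1 a natural number. Suppose A_i (for i < n) are sets of vertices each spanning an n-connected subgraph of G, and there are pairwise distinct vertices y_{i,k} (for i < n, k < n) and x_k (for k < n), all n² + n of them distinct, such that y_{i,k} ∈ A_i and y_{i,k} is adjacent to x_k in G for all i < n and k < n. Then the set A = ⋃_{i<n} A_i ∪ {x_k : k < n} spans an n-connected subgraph of G. -/
open Function

theorem Finset.exists_disjoint_of_card_lt {ι V : Type*} [Fintype ι] {S : ι → Set V}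
    (hS : Pairwise (Disjoint on S)) {F : Finset V} (hF : F.card < Fintype.card ι) :
    ∃ i, Disjoint (S i) F := by
  by_contra! h
  choose f hfS hfF using fun i => Set.not_disjoint_iff.mp (h i)
  have hf : Injective f := fun i j hij =>
    hS.eq (Set.not_disjoint_iff.mpr ⟨f i, hfS i, hij ▸ hfS j⟩)
  have := Finset.card_le_card_of_injOn (s := Finset.univ) f (fun i _ => hfF i) hf.injOn
  rw [Finset.card_univ] at this
  omega

theorem Function.Injective.exists_forall_notMem_of_card_lt {ι κ V : Type*} [Fintype ι]
    {f : κ → V} (hf : Injective f) {T : ι → Set κ} (hT : Pairwise (Disjoint on T))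
    {F : Finset V} (hF : F.card < Fintype.card ι) : ∃ i, ∀ t ∈ T i, f t ∉ F := by
  obtain ⟨i, hi⟩ := Finset.exists_disjoint_of_card_lt (S := fun i => f '' T i)
    (fun i j hij => (Set.disjoint_image_iff hf).mpr (hT hij)) hF
  exact ⟨i, fun t ht => Set.disjoint_left.mp hi (Set.mem_image_of_mem f ht)⟩

namespace SimpleGraph

variable {V : Type*} {G : SimpleGraph V}

theorem connected_induce_union_of_forall_adj {s t : Set V} (hs : (G.induce s).Connected)
    (ht : ∀ v ∈ t, ∃ w ∈ s, G.Adj v w) : (G.induce (s ∪ t)).Connected := by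
  obtain ⟨⟨u, hu⟩⟩ := hs.nonempty
  refine G.induce_connected_of_patches u (.inl hu) fun {v} hv => ?_
  rcases hv with hv | hv
  · exact ⟨s, Set.subset_union_left, hu, hv, hs.preconnected _ _⟩
  · obtain ⟨w, hw, hvw⟩ := ht v hv
    refine ⟨s ∪ {v}, Set.union_subset_union_right s (Set.singleton_subset_iff.mpr hv),
      .inl hu, .inr rfl, ?_⟩
    exact (connected_induce_union (t := {v}) hs.preconnected .of_subsingleton
      hw rfl hvw.symm).preconnected _ _

theorem connected_induce_iUnion {ι : Type*} [Nonempty ι] {s : ι → Set V}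
    (hs : ∀ i, (G.induce (s i)).Connected) (hmeet : ∀ i j, (s i ∩ s j).Nonempty) :
    (G.induce (⋃ i, s i)).Connected := by
  rw [← Set.sUnion_range]
  refine induce_sUnion_connected_of_pairwise_not_disjoint (Set.range_nonempty s) ?_ ?_
  · rintro _ _ ⟨i, rfl⟩ ⟨j, rfl⟩
    exact hmeet i j
  · rintro _ ⟨i, rfl⟩
    exact hs i

end SimpleGraph

theorem SpansNConnected.connected_induce_diff_s9 {V : Type*} {G : SimpleGraph V} {n : ℕ} {A : Set V}
    (hA : SpansNConnected G n A) {F : Finset V} (hF : F.card < n) :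
    (G.induce (A \ F)).Connected := by
  classical
  have := hA (F.filter (· ∈ A)) (by intro v; simp +contextual)
    ((F.card_filter_le _).trans_lt hF)
  rwa [show A \ ↑(F.filter (· ∈ A)) = A \ F by ext; simp +contextual] at this

section Linkage

variable {V : Type*} {n : ℕ} {y : Fin n → Fin n → V} {x : Fin n → V}
  (hdist : Injective (Sum.elim (fun q : Fin n × Fin n => y q.1 q.2) x))
  {F : Finset V} (hF : F.card < n)
include hdist hF

theorem exists_common_neighbor_notMem (i j : Fin n) : ∃ k, x k ∉ F ∧ y i k ∉ F ∧ y j k ∉ F := by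
  obtain ⟨k, hk⟩ := hdist.exists_forall_notMem_of_card_lt
    (T := fun k => {.inr k, .inl (i, k), .inl (j, k)})
    (fun k l hkl => by simp [onFun, Set.disjoint_left, hkl]) (by simpa using hF)
  exact ⟨k, by simpa using hk⟩

theorem exists_neighbor_notMem (k : Fin n) : ∃ i, y i k ∉ F := by
  obtain ⟨i, hi⟩ := hdist.exists_forall_notMem_of_card_lt (T := fun i => {.inl (i, k)})
    (fun i j hij => by simp [onFun, hij]) (by simpa using hF)
  exact ⟨i, by simpa using hi⟩

theorem iUnion_union_range_diff_eq (A : Fin n → Set V) :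
    ((⋃ i, A i) ∪ Set.range x) \ F = ⋃ i, (A i \ F) ∪ x '' {k | x k ∉ F ∧ y i k ∉ F} := by
  refine subset_antisymm ?_ (Set.iUnion_subset fun i => ?_)
  · rintro v ⟨hv | ⟨k, rfl⟩, hvF⟩
    · obtain ⟨i, hi⟩ := Set.mem_iUnion.mp hv
      exact Set.mem_iUnion.mpr ⟨i, .inl ⟨hi, hvF⟩⟩
    · obtain ⟨i, hi⟩ := exists_neighbor_notMem hdist hF k
      exact Set.mem_iUnion.mpr ⟨i, .inr ⟨k, ⟨hvF, hi⟩, rfl⟩⟩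
  · rintro v (⟨hv, hvF⟩ | ⟨k, ⟨hk, -⟩, rfl⟩)
    · exact ⟨.inl (Set.mem_iUnion.mpr ⟨i, hv⟩), hvF⟩
    · exact ⟨.inr ⟨k, rfl⟩, hk⟩

end Linkage

theorem spansNConnected_union_general {V : Type*} (G : SimpleGraph V) (n : ℕ)
    (A : Fin n → Set V) (hA : ∀ i, SpansNConnected G n (A i))
    (y : Fin n → Fin n → V) (x : Fin n → V)
    (hmem : ∀ i k, y i k ∈ A i)
    (hadj : ∀ i k, G.Adj (x k) (y i k))
    (hdist : Function.Injective
      (Sum.elim (fun q : Fin n × Fin n => y q.1 q.2) x)) :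
    SpansNConnected G n ((⋃ i, A i) ∪ Set.range x) := by
  intro F _ hF
  have : Nonempty (Fin n) := ⟨⟨0, by omega⟩⟩
  let E i := (A i \ F) ∪ x '' {k | x k ∉ F ∧ y i k ∉ F}
  have hE i : (G.induce (E i)).Connected := by
    refine SimpleGraph.connected_induce_union_of_forall_adj ((hA i).connected_induce_diff_s9 hF) ?_
    rintro _ ⟨k, ⟨-, hyk⟩, rfl⟩
    exact ⟨y i k, ⟨hmem i k, hyk⟩, hadj i k⟩
  have hmeet i j : (E i ∩ E j).Nonempty := by
    obtain ⟨k, hxk, hyik, hyjk⟩ := exists_common_neighbor_notMem hdist hF i j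
    exact ⟨x k, .inr ⟨k, ⟨hxk, hyik⟩, rfl⟩, .inr ⟨k, ⟨hxk, hyjk⟩, rfl⟩⟩
  rw [iUnion_union_range_diff_eq hdist hF A]
  exact SimpleGraph.connected_induce_iUnion hE hmeet

/-- Joining `n`-connected sets: if each `A i` (`i < n`) spans an `n`-connected
subgraph and there are `n² + n` pairwise distinct vertices `y i k` and `x k`
(`i, k < n`) with `y i k ∈ A i` adjacent to `x k`, then
`⋃ i, A i ∪ {x k : k < n}` spans an `n`-connected subgraph. -/
theorem spansNConnected_union {V : Type*} (G : SimpleGraph V) (n : ℕ) (hn : 1 ≤ n)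
    (A : Fin n → Set V) (hA : ∀ i, SpansNConnected G n (A i))
    (y : Fin n → Fin n → V) (x : Fin n → V)
    (hmem : ∀ i k, y i k ∈ A i)
    (hadj : ∀ i k, G.Adj (x k) (y i k))
    (hdist : Function.Injective
      (Sum.elim (fun q : Fin n × Fin n => y q.1 q.2) x)) :
    SpansNConnected G n ((⋃ i, A i) ∪ Set.range x) :=
  spansNConnected_union_general G n A hA y x hmem hadj hdist
end
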